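/- Let a ≥ 1 and b ≥ 2 be integers and R = (b^a). Let π be a partition with exactly 2a nonzero parts and let π̄ be the partition with parts π̄_i = π_i − 1 for 1 ≤ i ≤ 2a (π with its first column removed). If μ ⊆ R and the Littlewood–Richardson coefficient c^π_{μ, μ^c} (complement in R) is nonzero, then μ_a ≥ 1 and μ₁ ≤ b − 1; moreover, for μ ⊆ R with μ_a ≥ 1 and μ₁ ≤ b − 1, letting μ̄ be the partition with parts μ̄_i = μ_i − 1 for 1 ≤ i ≤ a, the coefficient c^π_{μ, μ^c} is nonzero if and only if c^{π̄}_{μ̄, μ̄^c} is nonzero, where the latter complement is taken in the rectangle ((b−2)^a). -/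

import Mathlib

open scoped Classical

/-!  Common definitions: the ring `Λ` of symmetric functions is realized inside the ring
`MvPowerSeries ℕ ℚ` of formal power series in countably many variables `x₀, x₁, x₂, …`
with rational coefficients; Schur functions are defined by their monomial expansion over
semistandard Young tableaux, and Littlewood–Richardson coefficients are defined as the
number of Littlewood–Richardson fillings (semistandard skew fillings whose reverse reading
word is a lattice word), which is the coefficient of `s_ν` in `s_lam ⬝ s_μ`. -/

/-- The Schur function `s_μ` of a Young diagram `μ`: the coefficient of the monomial `x^m`
is the number of semistandard Young tableaux of shape `μ` with weight `m`. -/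
noncomputable def schur (μ : YoungDiagram) : MvPowerSeries ℕ ℚ :=
  fun m : ℕ →₀ ℕ =>
    (Set.ncard {T : SemistandardYoungTableau μ |
        ∀ k : ℕ, (μ.cells.filter fun c => T c.1 c.2 = k).card = m k} : ℚ)

/-- A Littlewood–Richardson filling of the skew shape `ν/lam` with content `μ`:
a filling of the cells of `ν` not in `lam` with entries `0, 1, 2, …` that is weakly
increasing along rows, strictly increasing down columns, in which the entry `k` occurs
`μ.rowLen k` times, and such that reading right-to-left along rows, top to bottom, every
initial segment contains at least as many `k`'s as `(k+1)`'s (the lattice word condition). -/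
structure LRFilling (ν lam μ : YoungDiagram) : Type where
  le : lam ≤ ν
  entry : ℕ → ℕ → ℕ
  zeros : ∀ i j, (i, j) ∉ ν.cells \ lam.cells → entry i j = 0
  row_weak : ∀ i j, (i, j) ∈ ν.cells \ lam.cells → (i, j + 1) ∈ ν.cells \ lam.cells →
    entry i j ≤ entry i (j + 1)
  col_strict : ∀ i j, (i, j) ∈ ν.cells \ lam.cells → (i + 1, j) ∈ ν.cells \ lam.cells →
    entry i j < entry (i + 1) j
  content : ∀ k, ((ν.cells \ lam.cells).filter fun c => entry c.1 c.2 = k).card = μ.rowLen k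
  lattice : ∀ i j k,
    ((ν.cells \ lam.cells).filter fun c =>
        (c.1 < i ∨ (c.1 = i ∧ j ≤ c.2)) ∧ entry c.1 c.2 = k + 1).card ≤
    ((ν.cells \ lam.cells).filter fun c =>
        (c.1 < i ∨ (c.1 = i ∧ j ≤ c.2)) ∧ entry c.1 c.2 = k).card

/-- The Littlewood–Richardson coefficient `c^ν_{lam,μ}`, i.e. the coefficient of the
Schur function `s_ν` in the product `s_lam ⬝ s_μ`. -/
noncomputable def lrCoeff (ν lam μ : YoungDiagram) : ℕ :=
  Nat.card (LRFilling ν lam μ)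

/-- The `a × b` rectangular Young diagram `R = (b^a)`. -/
def rect (a b : ℕ) : YoungDiagram :=
  ⟨Finset.range a ×ˢ Finset.range b, by
    rintro ⟨i, j⟩ ⟨i', j'⟩ ⟨hi, hj⟩ h
    simp only [Finset.coe_product, Finset.coe_range, Set.mem_prod, Set.mem_Iio] at h ⊢
    exact ⟨lt_of_le_of_lt hi h.1, lt_of_le_of_lt hj h.2⟩⟩

/-- The complement `μᶜ` of `μ` in the `a × b` rectangle: the boxes of the rectangle
not in `μ`, rotated by 180°; its parts are `(μᶜ)ᵢ = b - μ_{a+1-i}` for `1 ≤ i ≤ a`. -/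
def rectCompl (a b : ℕ) (μ : YoungDiagram) : YoungDiagram :=
  ⟨(rect a b).cells.filter fun c => (a - 1 - c.1, b - 1 - c.2) ∉ μ, by
    rintro ⟨i, j⟩ ⟨i', j'⟩ ⟨hi, hj⟩ h
    simp only [Finset.coe_filter, Set.mem_setOf_eq] at h ⊢
    refine ⟨(rect a b).isLowerSet ⟨hi, hj⟩ h.1, fun hmem => h.2 ?_⟩
    exact μ.isLowerSet ⟨Nat.sub_le_sub_left hi _, Nat.sub_le_sub_left hj _⟩ hmem⟩

/-- Greedy `w`-decomposition piece sizes, starting from the state where `r` horizontal and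
`c` vertical pieces have already been taken.  The letter `true` stands for `h` (a horizontal
piece: the rest of row `r`), `false` for `v` (a vertical piece: the rest of column `c`). -/
def wPieces : List Bool → ℕ → ℕ → YoungDiagram → List ℕ
  | [], _, _, _ => []
  | true :: w, r, c, lam => (lam.rowLen r - c) :: wPieces w (r + 1) c lam
  | false :: w, r, c, lam => (lam.colLen c - r) :: wPieces w r (c + 1) lam

/-- The `w`-notation `lam^w` of a partition `lam`: the list of piece sizes of its greedy
`w`-decomposition. -/
def wNotation (w : List Bool) (lam : YoungDiagram) : List ℕ :=
  wPieces w 0 0 lam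

/-- `lexLE l₁ l₂` : `l₁ ≤ l₂` in lexicographic order. -/
def lexLE (l₁ l₂ : List ℕ) : Prop :=
  l₁ = l₂ ∨ List.Lex (· < ·) l₁ l₂

/-- Remove the first row of a Young diagram. -/
def stripRow (lam : YoungDiagram) : YoungDiagram :=
  ⟨(lam.cells.filter fun c => 0 < c.1).image fun c => (c.1 - 1, c.2), by
    rintro ⟨i', j'⟩ ⟨i, j⟩ ⟨hi, hj⟩ h
    simp only [Finset.coe_image, Finset.coe_filter, Set.mem_image, Set.mem_setOf_eq,
      Prod.exists] at h ⊢
    obtain ⟨x, y, ⟨hxy, hx⟩, heq⟩ := h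
    obtain ⟨hx1, rfl⟩ : x - 1 = i' ∧ y = j' := by simpa [Prod.ext_iff] using heq
    exact ⟨i + 1, j, ⟨lam.isLowerSet (b := (i + 1, j)) ⟨by omega, by simpa using hj⟩ hxy,
      by omega⟩, by simp⟩⟩

/-- Remove the first column of a Young diagram. -/
def stripCol (lam : YoungDiagram) : YoungDiagram :=
  (stripRow lam.transpose).transpose

/-- For `a`, `b` both odd, `lam` is almost self-complementary in the `a × b` rectangle if
`lam` is contained in the rectangle and the diagrams of `lam` and of its complement differ
only in which one contains the central box (row `(a+1)/2`, column `(b+1)/2`, 1-indexed). -/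
def AlmostSelfCompl (a b : ℕ) (lam : YoungDiagram) : Prop :=
  lam ≤ rect a b ∧
    lam.cells \ (rectCompl a b lam).cells ∪ (rectCompl a b lam).cells \ lam.cells =
      {((a - 1) / 2, (b - 1) / 2)}


/-! ### Auxiliary lemmas -/

section Aux

open YoungDiagram

lemma mem_rect {a b i j : ℕ} : (i, j) ∈ rect a b ↔ i < a ∧ j < b := by
  show (i, j) ∈ Finset.range a ×ˢ Finset.range b ↔ _
  simp [Finset.mem_product]

lemma mem_stripRow {lam : YoungDiagram} {i j : ℕ} : (i, j) ∈ stripRow lam ↔ (i + 1, j) ∈ lam := by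
  show (i, j) ∈ (lam.cells.filter fun c => 0 < c.1).image (fun c => (c.1 - 1, c.2)) ↔ _
  simp only [Finset.mem_image, Finset.mem_filter, Prod.exists]
  constructor
  · rintro ⟨x, y, ⟨hxy, hx⟩, heq⟩
    obtain ⟨h1, h2⟩ : x - 1 = i ∧ y = j := by simpa [Prod.ext_iff] using heq
    have hx' : x = i + 1 := by omega
    subst hx'; subst h2
    simpa using hxy
  · intro h
    exact ⟨i + 1, j, ⟨by simpa using h, by omega⟩, by simp⟩

lemma mem_stripCol {lam : YoungDiagram} {i j : ℕ} : (i, j) ∈ stripCol lam ↔ (i, j + 1) ∈ lam := by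
  rw [stripCol, YoungDiagram.mem_transpose]
  show (j, i) ∈ stripRow lam.transpose ↔ _
  rw [mem_stripRow, YoungDiagram.mem_transpose]
  rfl

lemma mem_rectCompl {a b : ℕ} {μ : YoungDiagram} {i j : ℕ} :
    (i, j) ∈ rectCompl a b μ ↔ (i < a ∧ j < b) ∧ (a - 1 - i, b - 1 - j) ∉ μ := by
  show (i, j) ∈ (rect a b).cells.filter (fun c => (a - 1 - c.1, b - 1 - c.2) ∉ μ) ↔ _
  simp only [Finset.mem_filter, YoungDiagram.mem_cells]
  rw [mem_rect]

lemma rowLen_eq (μ : YoungDiagram) (i n : ℕ) (h : ∀ j, (i, j) ∈ μ ↔ j < n) : μ.rowLen i = n := by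
  rcases Nat.lt_trichotomy (μ.rowLen i) n with hlt | he | hgt
  · have := YoungDiagram.mem_iff_lt_rowLen.mp ((h (μ.rowLen i)).mpr hlt)
    omega
  · exact he
  · have := (h n).mp (YoungDiagram.mem_iff_lt_rowLen.mpr hgt)
    omega

lemma rowLen_le {a b : ℕ} {μ : YoungDiagram} (hμ : μ ≤ rect a b) (i : ℕ) : μ.rowLen i ≤ b := by
  by_contra h
  push_neg at h
  have h1 : (i, b) ∈ μ := YoungDiagram.mem_iff_lt_rowLen.mpr h
  have h2 : (i, b) ∈ rect a b := hμ h1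
  rw [mem_rect] at h2
  omega

lemma rowLen_zero_of {a b : ℕ} {μ : YoungDiagram} (hμ : μ ≤ rect a b) {i : ℕ} (hi : a ≤ i) :
    μ.rowLen i = 0 := by
  by_contra h
  have h1 : (i, 0) ∈ μ := YoungDiagram.mem_iff_lt_rowLen.mpr (by omega)
  have h2 : (i, 0) ∈ rect a b := hμ h1
  rw [mem_rect] at h2
  omega

lemma colLen_le {a b : ℕ} {μ : YoungDiagram} (hμ : μ ≤ rect a b) : μ.colLen 0 ≤ a := by
  by_contra h
  push_neg at h
  have h1 : (a, 0) ∈ μ := YoungDiagram.mem_iff_lt_colLen.mpr h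
  have h2 : (a, 0) ∈ rect a b := hμ h1
  rw [mem_rect] at h2
  omega

lemma rectCompl_le {a b : ℕ} {μ : YoungDiagram} : rectCompl a b μ ≤ rect a b := by
  intro c hc
  obtain ⟨i, j⟩ := c
  rw [mem_rectCompl] at hc
  rw [mem_rect]
  exact hc.1

lemma rowLen_rectCompl {a b k : ℕ} {μ : YoungDiagram} (hμ : μ ≤ rect a b) (hk : k < a) :
    (rectCompl a b μ).rowLen k = b - μ.rowLen (a - 1 - k) := by
  have hm : μ.rowLen (a - 1 - k) ≤ b := rowLen_le hμ _
  apply rowLen_eq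
  intro j
  rw [mem_rectCompl]
  rw [YoungDiagram.mem_iff_lt_rowLen]
  omega

lemma rowLen_rectCompl_zero {a b k : ℕ} {μ : YoungDiagram} (hk : a ≤ k) :
    (rectCompl a b μ).rowLen k = 0 :=
  rowLen_zero_of rectCompl_le hk

lemma rowLen_stripCol {μ : YoungDiagram} (i : ℕ) : (stripCol μ).rowLen i = μ.rowLen i - 1 := by
  apply rowLen_eq
  intro j
  rw [mem_stripCol, YoungDiagram.mem_iff_lt_rowLen]
  omega

lemma hshift {π μ : YoungDiagram} (i j : ℕ) :
    (i, j) ∈ (stripCol π).cells \ (stripCol μ).cells ↔ (i, j + 1) ∈ π.cells \ μ.cells := by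
  simp only [Finset.mem_sdiff, YoungDiagram.mem_cells, mem_stripCol]

lemma entry_lt {ν lam κ : YoungDiagram} (F : LRFilling ν lam κ) {K : ℕ} (hK : κ.rowLen K = 0)
    {i j : ℕ} (hc : (i, j) ∈ ν.cells \ lam.cells) : F.entry i j < K := by
  by_contra h
  push_neg at h
  have h0 : κ.rowLen (F.entry i j) = 0 :=
    Nat.le_antisymm (hK ▸ κ.rowLen_anti K _ h) (Nat.zero_le _)
  have hmem : (i, j) ∈ (ν.cells \ lam.cells).filter (fun c => F.entry c.1 c.2 = F.entry i j) :=
    Finset.mem_filter.mpr ⟨hc, rfl⟩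
  have hcard : 0 < ((ν.cells \ lam.cells).filter
      (fun c => F.entry c.1 c.2 = F.entry i j)).card := Finset.card_pos.mpr ⟨_, hmem⟩
  have := F.content (F.entry i j)
  omega

lemma col_chain {ν lam κ : YoungDiagram} (F : LRFilling ν lam κ) (s : ℕ) :
    ∀ t, s ≤ t → (∀ r, s ≤ r → r ≤ t → (r, 0) ∈ ν.cells \ lam.cells) →
      F.entry s 0 + (t - s) ≤ F.entry t 0 := by
  intro t
  induction t with
  | zero =>
    intro h _
    have : s = 0 := Nat.le_zero.mp h
    subst this
    simp
  | succ t ih =>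
    intro hst hall
    rcases Nat.eq_or_lt_of_le hst with he | hlt
    · rw [← he]
      simp
    · have h1 := ih (by omega) (fun r hr hr' => hall r hr (by omega))
      have h2 := F.col_strict t 0 (hall t (by omega) (by omega)) (hall (t + 1) (by omega) (by omega))
      omega

lemma card_split (π μ : YoungDiagram) (p : ℕ × ℕ → Prop) [DecidablePred p]
    (g : ℕ → ℕ → ℕ) (k : ℕ) :
    ((π.cells \ μ.cells).filter fun c => p c ∧ g c.1 c.2 = k).card
      = ((π.cells \ μ.cells).filter fun c => (p c ∧ g c.1 c.2 = k) ∧ c.2 = 0).card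
        + (((stripCol π).cells \ (stripCol μ).cells).filter
            fun c => p (c.1, c.2 + 1) ∧ g c.1 (c.2 + 1) = k).card := by
  classical
  have hsplit := Finset.card_filter_add_card_filter_not
      (s := (π.cells \ μ.cells).filter fun c => p c ∧ g c.1 c.2 = k)
      (p := fun c : ℕ × ℕ => c.2 = 0)
  rw [Finset.filter_filter, Finset.filter_filter] at hsplit
  have hbij : ((π.cells \ μ.cells).filter fun c => (p c ∧ g c.1 c.2 = k) ∧ ¬c.2 = 0).card
      = (((stripCol π).cells \ (stripCol μ).cells).filter
          fun c => p (c.1, c.2 + 1) ∧ g c.1 (c.2 + 1) = k).card := by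
    apply Finset.card_nbij' (i := fun c => (c.1, c.2 - 1)) (j := fun c => (c.1, c.2 + 1))
    · rintro ⟨i, j⟩ hc
      rw [Finset.mem_coe, Finset.mem_filter] at hc
      obtain ⟨hmem, ⟨hp, hg⟩, hj⟩ := hc
      have hj1 : j - 1 + 1 = j := by omega
      rw [Finset.mem_coe, Finset.mem_filter]
      refine ⟨?_, ?_, ?_⟩
      · rw [hshift, hj1]
        exact hmem
      · simpa [hj1] using hp
      · simpa [hj1] using hg
    · rintro ⟨i, j⟩ hc
      rw [Finset.mem_coe, Finset.mem_filter] at hc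
      obtain ⟨hmem, hp, hg⟩ := hc
      rw [hshift] at hmem
      rw [Finset.mem_coe, Finset.mem_filter]
      exact ⟨hmem, ⟨hp, hg⟩, by dsimp only; omega⟩
    · rintro ⟨i, j⟩ hc
      rw [Finset.mem_coe, Finset.mem_filter] at hc
      have : j - 1 + 1 = j := by omega
      simp [this]
    · rintro ⟨i, j⟩ _
      simp
  omega

lemma col0_card {a : ℕ} {π μ : YoungDiagram} (p : ℕ × ℕ → Prop) [DecidablePred p]
    (g : ℕ → ℕ → ℕ)
    (hsk : ∀ i : ℕ, (i, (0 : ℕ)) ∈ π.cells \ μ.cells ↔ a ≤ i ∧ i < 2 * a)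
    (hg : ∀ t, a ≤ t → t < 2 * a → g t 0 = t - a) (k : ℕ) :
    ((π.cells \ μ.cells).filter fun c => (p c ∧ g c.1 c.2 = k) ∧ c.2 = 0).card
      = if k < a ∧ p (a + k, 0) then 1 else 0 := by
  classical
  split_ifs with h
  · rw [Finset.card_eq_one]
    refine ⟨(a + k, 0), ?_⟩
    ext ⟨i, j⟩
    simp only [Finset.mem_filter, Finset.mem_singleton, Prod.mk.injEq]
    constructor
    · rintro ⟨hc, ⟨hp, hgk⟩, hj⟩
      subst hj
      have hi := (hsk i).mp hc
      have := hg i hi.1 hi.2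
      exact ⟨by omega, rfl⟩
    · rintro ⟨rfl, rfl⟩
      refine ⟨(hsk _).mpr ⟨by omega, by omega⟩, ⟨h.2, ?_⟩, rfl⟩
      rw [hg _ (by omega) (by omega)]
      omega
  · rw [Finset.card_eq_zero, Finset.filter_eq_empty_iff]
    rintro ⟨i, j⟩ hc hcon
    obtain ⟨⟨hp, hgk⟩, hj⟩ := hcon
    subst hj
    have hi := (hsk i).mp hc
    have hgi := hg i hi.1 hi.2
    have hgk' : g i 0 = k := hgk
    have hik : i = a + k := by omega
    subst hik
    exact h ⟨by omega, hp⟩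

lemma pi_col {a : ℕ} {π : YoungDiagram} (ha : 1 ≤ a)
    (hπpos : 0 < π.rowLen (2 * a - 1)) (hπzero : π.rowLen (2 * a) = 0) :
    ∀ i, (i, (0 : ℕ)) ∈ π ↔ i < 2 * a := by
  intro i
  rw [YoungDiagram.mem_iff_lt_rowLen]
  constructor
  · intro h
    by_contra hge
    push_neg at hge
    have := π.rowLen_anti (2 * a) i hge
    omega
  · intro h
    have := π.rowLen_anti i (2 * a - 1) (by omega)
    omega

lemma part1 {a b : ℕ} {π μ : YoungDiagram} (ha : 1 ≤ a)
    (hπcol : ∀ i, (i, (0 : ℕ)) ∈ π ↔ i < 2 * a) (hμ : μ ≤ rect a b)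
    (F : LRFilling π μ (rectCompl a b μ)) :
    1 ≤ μ.rowLen (a - 1) ∧ μ.rowLen 0 ≤ b - 1 := by
  have hm : μ.colLen 0 ≤ a := colLen_le hμ
  have hskew : ∀ r, μ.colLen 0 ≤ r → r < 2 * a → (r, (0 : ℕ)) ∈ π.cells \ μ.cells := by
    intro r h1 h2
    rw [Finset.mem_sdiff]
    refine ⟨by rw [YoungDiagram.mem_cells]; exact (hπcol r).mpr h2, fun hmem => ?_⟩
    rw [YoungDiagram.mem_cells, YoungDiagram.mem_iff_lt_colLen] at hmem
    omega
  have hchain := col_chain F (μ.colLen 0) (2 * a - 1) (by omega)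
      (fun r h1 h2 => hskew r h1 (by omega))
  have hlt : F.entry (2 * a - 1) 0 < a :=
    entry_lt F (rowLen_rectCompl_zero le_rfl) (hskew _ (by omega) (by omega))
  have hma : μ.colLen 0 = a := by omega
  have h1 : 1 ≤ μ.rowLen (a - 1) := by
    have h2 : ((a : ℕ) - 1, (0 : ℕ)) ∈ μ := YoungDiagram.mem_iff_lt_colLen.mpr (by omega)
    rw [YoungDiagram.mem_iff_lt_rowLen] at h2
    omega
  refine ⟨h1, ?_⟩
  by_contra hbb
  push_neg at hbb
  have hble := rowLen_le hμ 0
  have hb0 : μ.rowLen 0 = b := by omega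
  have hz : (rectCompl a b μ).rowLen (a - 1) = 0 := by
    rw [rowLen_rectCompl hμ (by omega), show a - 1 - (a - 1) = 0 from by omega, hb0]
    omega
  have hlt2 : F.entry (2 * a - 1) 0 < a - 1 :=
    entry_lt F hz (hskew _ (by omega) (by omega))
  omega

end Aux


/-! ### Main constructions -/

section Main

variable {a b : ℕ} {π μ : YoungDiagram}

lemma hmu0 (hμ : μ ≤ rect a b) (hμa : 1 ≤ μ.rowLen (a - 1)) :
    ∀ i, (i, (0 : ℕ)) ∈ μ ↔ i < a := by
  intro i
  rw [YoungDiagram.mem_iff_lt_rowLen]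
  constructor
  · intro h
    by_contra hge
    push_neg at hge
    rw [rowLen_zero_of hμ hge] at h
    omega
  · intro h
    have := μ.rowLen_anti i (a - 1) (by omega)
    omega

lemma hskchar (hπcol : ∀ i, (i, (0 : ℕ)) ∈ π ↔ i < 2 * a) (hμ : μ ≤ rect a b)
    (hμa : 1 ≤ μ.rowLen (a - 1)) :
    ∀ i : ℕ, (i, (0 : ℕ)) ∈ π.cells \ μ.cells ↔ a ≤ i ∧ i < 2 * a := by
  intro i
  rw [Finset.mem_sdiff, YoungDiagram.mem_cells, YoungDiagram.mem_cells, hπcol i,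
    hmu0 hμ hμa i]
  omega

lemma not_mem_mu (hμ : μ ≤ rect a b) {i j : ℕ} (hi : a ≤ i) : (i, j) ∉ μ := fun h => by
  have h2 := hμ h
  rw [mem_rect] at h2
  omega

lemma forced (ha : 1 ≤ a) (hπcol : ∀ i, (i, (0 : ℕ)) ∈ π ↔ i < 2 * a) (hμ : μ ≤ rect a b)
    (hμa : 1 ≤ μ.rowLen (a - 1)) (F : LRFilling π μ (rectCompl a b μ)) :
    ∀ t, a ≤ t → t < 2 * a → F.entry t 0 = t - a := by
  intro t h1 h2
  have hsk := hskchar hπcol hμ hμa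
  have hlow := col_chain F a t h1 (fun r hr hr' => (hsk r).mpr ⟨hr, by omega⟩)
  have hhigh := col_chain F t (2 * a - 1) (by omega)
      (fun r hr hr' => (hsk r).mpr ⟨by omega, by omega⟩)
  have hlt : F.entry (2 * a - 1) 0 < a :=
    entry_lt F (rowLen_rectCompl_zero le_rfl) ((hsk _).mpr ⟨by omega, by omega⟩)
  omega

lemma rowge (ha : 1 ≤ a) (hπcol : ∀ i, (i, (0 : ℕ)) ∈ π ↔ i < 2 * a) (hμ : μ ≤ rect a b)
    (hμa : 1 ≤ μ.rowLen (a - 1)) (F : LRFilling π μ (rectCompl a b μ)) :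
    ∀ j i, a ≤ i → (i, j) ∈ π.cells \ μ.cells → i - a ≤ F.entry i j := by
  intro j
  induction j with
  | zero =>
    intro i hi hc
    have h2 := ((hskchar hπcol hμ hμa) i).mp hc
    rw [forced ha hπcol hμ hμa F i hi h2.2]
  | succ j ih =>
    intro i hi hc
    have hcj : (i, j) ∈ π.cells \ μ.cells := by
      rw [Finset.mem_sdiff] at hc ⊢
      exact ⟨π.up_left_mem le_rfl (by omega) hc.1, not_mem_mu hμ hi⟩
    exact le_trans (ih i hi hcj) (F.row_weak i j hcj hc)

lemma stripCol_le_rect (hμ : μ ≤ rect a b) (hμb : μ.rowLen 0 ≤ b - 1) :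
    stripCol μ ≤ rect a (b - 2) := by
  rw [← YoungDiagram.cells_subset_iff]
  intro c hc
  obtain ⟨i, j⟩ := c
  rw [YoungDiagram.mem_cells] at hc ⊢
  rw [mem_stripCol] at hc
  have h1 := hμ hc
  rw [mem_rect] at h1
  rw [mem_rect]
  have h2 : j + 1 < μ.rowLen i := YoungDiagram.mem_iff_lt_rowLen.mp hc
  have h3 := μ.rowLen_anti 0 i (Nat.zero_le i)
  exact ⟨h1.1, by omega⟩

lemma compl_strip (ha : 1 ≤ a) (hμ : μ ≤ rect a b) (hμa : 1 ≤ μ.rowLen (a - 1)) :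
    rectCompl a (b - 2) (stripCol μ) = stripCol (rectCompl a b μ) := by
  apply SetLike.ext
  rintro ⟨i, j⟩
  rw [mem_stripCol, mem_rectCompl, mem_rectCompl, mem_stripCol]
  constructor
  · rintro ⟨⟨h1, h2⟩, h3⟩
    have he : b - 2 - 1 - j + 1 = b - 1 - (j + 1) := by omega
    rw [he] at h3
    exact ⟨⟨h1, by omega⟩, h3⟩
  · rintro ⟨⟨h1, h2⟩, h3⟩
    rcases Nat.lt_or_ge j (b - 2) with hj | hj
    · have he : b - 2 - 1 - j + 1 = b - 1 - (j + 1) := by omega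
      rw [he]
      exact ⟨⟨h1, hj⟩, h3⟩
    · exfalso
      apply h3
      have hbj : b - 1 - (j + 1) = 0 := by omega
      rw [hbj]
      exact (hmu0 hμ hμa (a - 1 - i)).mpr (by omega)

lemma nu_pos (hb : 2 ≤ b) (hμ : μ ≤ rect a b) (hμb : μ.rowLen 0 ≤ b - 1) {k : ℕ}
    (hk : k < a) : 1 ≤ (rectCompl a b μ).rowLen k := by
  rw [rowLen_rectCompl hμ hk]
  have h1 : μ.rowLen (a - 1 - k) ≤ μ.rowLen 0 := μ.rowLen_anti 0 _ (Nat.zero_le _)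
  omega

lemma nu'_rowLen (ha : 1 ≤ a) (hμ : μ ≤ rect a b) (hμa : 1 ≤ μ.rowLen (a - 1)) (k : ℕ) :
    (rectCompl a (b - 2) (stripCol μ)).rowLen k = (rectCompl a b μ).rowLen k - 1 := by
  rw [compl_strip ha hμ hμa, rowLen_stripCol]

lemma fwd_content (ha : 1 ≤ a) (hb : 2 ≤ b)
    (hπcol : ∀ i, (i, (0 : ℕ)) ∈ π ↔ i < 2 * a) (hμ : μ ≤ rect a b)
    (hμa : 1 ≤ μ.rowLen (a - 1)) (hμb : μ.rowLen 0 ≤ b - 1)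
    (F : LRFilling π μ (rectCompl a b μ)) (k : ℕ) :
    (((stripCol π).cells \ (stripCol μ).cells).filter
        fun c => F.entry c.1 (c.2 + 1) = k).card
      = (rectCompl a (b - 2) (stripCol μ)).rowLen k := by
  have hs := card_split π μ (fun _ => True) F.entry k
  have hc0 := col0_card (a := a) (fun _ => True) F.entry (hskchar hπcol hμ hμa)
      (forced ha hπcol hμ hμa F) k
  rw [hc0] at hs
  simp only [true_and, and_true] at hs
  rw [F.content k] at hs
  rw [nu'_rowLen ha hμ hμa k]
  rcases Nat.lt_or_ge k a with hk | hk
  · rw [if_pos hk] at hs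
    have hp := nu_pos hb hμ hμb hk
    omega
  · rw [if_neg (by omega)] at hs
    have hz := rowLen_rectCompl_zero (μ := μ) (b := b) hk
    omega

lemma fwd_lattice (ha : 1 ≤ a) (hb : 2 ≤ b)
    (hπcol : ∀ i, (i, (0 : ℕ)) ∈ π ↔ i < 2 * a) (hμ : μ ≤ rect a b)
    (hμa : 1 ≤ μ.rowLen (a - 1)) (hμb : μ.rowLen 0 ≤ b - 1)
    (F : LRFilling π μ (rectCompl a b μ)) (i j k : ℕ) :
    (((stripCol π).cells \ (stripCol μ).cells).filter
        fun c => (c.1 < i ∨ c.1 = i ∧ j ≤ c.2) ∧ F.entry c.1 (c.2 + 1) = k + 1).card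
      ≤ (((stripCol π).cells \ (stripCol μ).cells).filter
        fun c => (c.1 < i ∨ c.1 = i ∧ j ≤ c.2) ∧ F.entry c.1 (c.2 + 1) = k).card := by
  have hsk := hskchar hπcol hμ hμa
  by_cases hka : a ≤ k + 1
  · have hempty : (((stripCol π).cells \ (stripCol μ).cells).filter
        fun c => (c.1 < i ∨ c.1 = i ∧ j ≤ c.2) ∧ F.entry c.1 (c.2 + 1) = k + 1) = ∅ := by
      rw [Finset.filter_eq_empty_iff]
      rintro ⟨x, y⟩ hc hcon
      have hlt := entry_lt F (rowLen_rectCompl_zero (le_refl a)) ((hshift x y).mp hc)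
      have h2 : F.entry x (y + 1) = k + 1 := hcon.2
      omega
    rw [hempty]
    simp
  push_neg at hka
  by_cases hi : i = a + k + 1
  · subst hi
    have hsG1 := card_split π μ
        (fun c => c.1 < a + k + 1 ∨ c.1 = a + k + 1 ∧ 0 ≤ c.2) F.entry (k + 1)
    have hsG0 := card_split π μ
        (fun c => c.1 < a + k + 1 ∨ c.1 = a + k + 1 ∧ 0 ≤ c.2) F.entry k
    have hcG1 := col0_card (a := a)
        (fun c => c.1 < a + k + 1 ∨ c.1 = a + k + 1 ∧ 0 ≤ c.2) F.entry hsk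
        (forced ha hπcol hμ hμa F) (k + 1)
    have hcG0 := col0_card (a := a)
        (fun c => c.1 < a + k + 1 ∨ c.1 = a + k + 1 ∧ 0 ≤ c.2) F.entry hsk
        (forced ha hπcol hμ hμa F) k
    rw [hcG1] at hsG1
    rw [hcG0] at hsG0
    dsimp only at hsG1 hsG0
    have hrow : ∀ x y : ℕ, (x, y) ∈ (stripCol π).cells \ (stripCol μ).cells →
        x = a + k + 1 → k + 1 ≤ F.entry x (y + 1) := by
      intro x y hc hx
      subst hx
      have := rowge ha hπcol hμ hμa F (y + 1) (a + k + 1) (by omega) ((hshift _ _).mp hc)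
      omega
    have heq : (((stripCol π).cells \ (stripCol μ).cells).filter
          fun c => (c.1 < a + k + 1 ∨ c.1 = a + k + 1 ∧ 0 ≤ c.2 + 1) ∧
            F.entry c.1 (c.2 + 1) = k)
        = (((stripCol π).cells \ (stripCol μ).cells).filter
          fun c => (c.1 < a + k + 1 ∨ c.1 = a + k + 1 ∧ j ≤ c.2) ∧
            F.entry c.1 (c.2 + 1) = k) := by
      apply Finset.filter_congr
      rintro ⟨x, y⟩ hc
      dsimp only
      constructor
      · rintro ⟨h1, h2⟩
        rcases h1 with h1 | h1
        · exact ⟨Or.inl h1, h2⟩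
        · exfalso
          have := hrow x y hc h1.1
          omega
      · rintro ⟨h1, h2⟩
        exact ⟨by omega, h2⟩
    have hsub : (((stripCol π).cells \ (stripCol μ).cells).filter
          fun c => (c.1 < a + k + 1 ∨ c.1 = a + k + 1 ∧ j ≤ c.2) ∧
            F.entry c.1 (c.2 + 1) = k + 1).card
        ≤ (((stripCol π).cells \ (stripCol μ).cells).filter
          fun c => (c.1 < a + k + 1 ∨ c.1 = a + k + 1 ∧ 0 ≤ c.2 + 1) ∧
            F.entry c.1 (c.2 + 1) = k + 1).card := by
      apply Finset.card_le_card
      intro x hx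
      rw [Finset.mem_filter] at hx ⊢
      obtain ⟨hm, h1, h2⟩ := hx
      exact ⟨hm, by omega, h2⟩
    have hlat0 := F.lattice (a + k + 1) 0 k
    rw [hsG1, hsG0, heq] at hlat0
    split_ifs at hlat0 <;> omega
  · have hsA := card_split π μ (fun c => c.1 < i ∨ c.1 = i ∧ j + 1 ≤ c.2) F.entry (k + 1)
    have hsB := card_split π μ (fun c => c.1 < i ∨ c.1 = i ∧ j + 1 ≤ c.2) F.entry k
    have hcA := col0_card (a := a) (fun c => c.1 < i ∨ c.1 = i ∧ j + 1 ≤ c.2) F.entry hsk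
        (forced ha hπcol hμ hμa F) (k + 1)
    have hcB := col0_card (a := a) (fun c => c.1 < i ∨ c.1 = i ∧ j + 1 ≤ c.2) F.entry hsk
        (forced ha hπcol hμ hμa F) k
    rw [hcA] at hsA
    rw [hcB] at hsB
    dsimp only at hsA hsB
    have heA : (((stripCol π).cells \ (stripCol μ).cells).filter
          fun c => (c.1 < i ∨ c.1 = i ∧ j + 1 ≤ c.2 + 1) ∧ F.entry c.1 (c.2 + 1) = k + 1)
        = (((stripCol π).cells \ (stripCol μ).cells).filter
          fun c => (c.1 < i ∨ c.1 = i ∧ j ≤ c.2) ∧ F.entry c.1 (c.2 + 1) = k + 1) := by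
      apply Finset.filter_congr
      rintro ⟨x, y⟩ _
      dsimp only
      constructor <;> rintro ⟨h1, h2⟩ <;> exact ⟨by omega, h2⟩
    have heB : (((stripCol π).cells \ (stripCol μ).cells).filter
          fun c => (c.1 < i ∨ c.1 = i ∧ j + 1 ≤ c.2 + 1) ∧ F.entry c.1 (c.2 + 1) = k)
        = (((stripCol π).cells \ (stripCol μ).cells).filter
          fun c => (c.1 < i ∨ c.1 = i ∧ j ≤ c.2) ∧ F.entry c.1 (c.2 + 1) = k) := by
      apply Finset.filter_congr
      rintro ⟨x, y⟩ _
      dsimp only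
      constructor <;> rintro ⟨h1, h2⟩ <;> exact ⟨by omega, h2⟩
    rw [heA] at hsA
    rw [heB] at hsB
    have hlat := F.lattice i (j + 1) k
    rw [hsA, hsB] at hlat
    split_ifs at hlat <;> omega

def fwdF (ha : 1 ≤ a) (hb : 2 ≤ b)
    (hπcol : ∀ i, (i, (0 : ℕ)) ∈ π ↔ i < 2 * a) (hμ : μ ≤ rect a b)
    (hμa : 1 ≤ μ.rowLen (a - 1)) (hμb : μ.rowLen 0 ≤ b - 1)
    (F : LRFilling π μ (rectCompl a b μ)) :
    LRFilling (stripCol π) (stripCol μ) (rectCompl a (b - 2) (stripCol μ)) where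
  le := by
    rw [← YoungDiagram.cells_subset_iff]
    intro c hc
    obtain ⟨i, j⟩ := c
    rw [YoungDiagram.mem_cells, mem_stripCol] at hc ⊢
    exact F.le hc
  entry := fun i j => F.entry i (j + 1)
  zeros := by
    intro i j h
    exact F.zeros i (j + 1) (fun hc => h ((hshift i j).mpr hc))
  row_weak := by
    intro i j h1 h2
    exact F.row_weak i (j + 1) ((hshift _ _).mp h1) ((hshift _ _).mp h2)
  col_strict := by
    intro i j h1 h2
    exact F.col_strict i (j + 1) ((hshift _ _).mp h1) ((hshift _ _).mp h2)
  content := fun k => fwd_content ha hb hπcol hμ hμa hμb F k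
  lattice := fun i j k => fwd_lattice ha hb hπcol hμ hμa hμb F i j k

def bwdEntry (π μ : YoungDiagram) (a : ℕ) (e : ℕ → ℕ → ℕ) : ℕ → ℕ → ℕ := fun i j =>
  if j = 0 then (if (i, (0 : ℕ)) ∈ π.cells \ μ.cells then i - a else 0) else e i (j - 1)

lemma bwdEntry_succ (π μ : YoungDiagram) (a : ℕ) (e : ℕ → ℕ → ℕ) (i j : ℕ) :
    bwdEntry π μ a e i (j + 1) = e i j := by
  simp [bwdEntry]

lemma bwd_forced (e : ℕ → ℕ → ℕ)
    (hsk : ∀ i : ℕ, (i, (0 : ℕ)) ∈ π.cells \ μ.cells ↔ a ≤ i ∧ i < 2 * a) :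
    ∀ t, a ≤ t → t < 2 * a → bwdEntry π μ a e t 0 = t - a := by
  intro t h1 h2
  rw [bwdEntry]
  rw [if_pos rfl, if_pos ((hsk t).mpr ⟨h1, h2⟩)]

lemma bwd_rowge (hμ : μ ≤ rect a b) (hμb : μ.rowLen 0 ≤ b - 1)
    {ν' : YoungDiagram} (F' : LRFilling (stripCol π) (stripCol μ) ν') :
    ∀ i, (i, (0 : ℕ)) ∈ (stripCol π).cells \ (stripCol μ).cells → i - a ≤ F'.entry i 0 := by
  intro i hc
  have hm : (stripCol μ).colLen 0 ≤ a := colLen_le (stripCol_le_rect hμ hμb)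
  have hc' := Finset.mem_sdiff.mp hc
  have hnotmem : ¬ i < (stripCol μ).colLen 0 := by
    intro hlt
    exact hc'.2 (YoungDiagram.mem_iff_lt_colLen.mpr hlt)
  have hchain := col_chain F' ((stripCol μ).colLen 0) i (by omega) (fun r hr hr' => by
    rw [Finset.mem_sdiff]
    constructor
    · exact (stripCol π).up_left_mem hr' le_rfl hc'.1
    · intro hmem
      rw [YoungDiagram.mem_cells, YoungDiagram.mem_iff_lt_colLen] at hmem
      omega)
  omega

def bwdF (ha : 1 ≤ a) (hb : 2 ≤ b)
    (hπcol : ∀ i, (i, (0 : ℕ)) ∈ π ↔ i < 2 * a) (hμ : μ ≤ rect a b)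
    (hμa : 1 ≤ μ.rowLen (a - 1)) (hμb : μ.rowLen 0 ≤ b - 1)
    (F' : LRFilling (stripCol π) (stripCol μ) (rectCompl a (b - 2) (stripCol μ))) :
    LRFilling π μ (rectCompl a b μ) where
  le := by
    rw [← YoungDiagram.cells_subset_iff]
    intro c hc
    obtain ⟨i, j⟩ := c
    rw [YoungDiagram.mem_cells] at hc ⊢
    cases j with
    | zero =>
      rw [hπcol]
      have := (hmu0 hμ hμa i).mp hc
      omega
    | succ j =>
      have h1 : (i, j) ∈ stripCol μ := mem_stripCol.mpr hc
      exact mem_stripCol.mp (F'.le h1)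
  entry := bwdEntry π μ a F'.entry
  zeros := by
    intro i j h
    cases j with
    | zero =>
      rw [bwdEntry]
      rw [if_pos rfl, if_neg h]
    | succ j =>
      rw [bwdEntry_succ]
      apply F'.zeros
      rw [hshift]
      exact h
  row_weak := by
    intro i j h1 h2
    cases j with
    | zero =>
      have hsk := hskchar hπcol hμ hμa
      have hi := (hsk i).mp h1
      rw [bwd_forced F'.entry hsk i hi.1 hi.2, bwdEntry_succ]
      exact bwd_rowge hμ hμb F' i ((hshift i 0).mpr h2)
    | succ j =>
      rw [bwdEntry_succ, bwdEntry_succ]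
      exact F'.row_weak i j ((hshift _ _).mpr h1) ((hshift _ _).mpr h2)
  col_strict := by
    intro i j h1 h2
    cases j with
    | zero =>
      have hsk := hskchar hπcol hμ hμa
      have hi1 := (hsk i).mp h1
      have hi2 := (hsk (i + 1)).mp h2
      rw [bwd_forced F'.entry hsk i hi1.1 hi1.2, bwd_forced F'.entry hsk (i + 1) hi2.1 hi2.2]
      omega
    | succ j =>
      rw [bwdEntry_succ, bwdEntry_succ]
      exact F'.col_strict i j ((hshift _ _).mpr h1) ((hshift _ _).mpr h2)
  content := by
    intro k
    have hsk := hskchar hπcol hμ hμa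
    have hs := card_split π μ (fun _ => True) (bwdEntry π μ a F'.entry) k
    have hc0 := col0_card (a := a) (fun _ => True) (bwdEntry π μ a F'.entry) hsk
        (bwd_forced F'.entry hsk) k
    rw [hc0] at hs
    simp only [true_and, and_true] at hs
    have he : (((stripCol π).cells \ (stripCol μ).cells).filter
          fun c => bwdEntry π μ a F'.entry c.1 (c.2 + 1) = k)
        = (((stripCol π).cells \ (stripCol μ).cells).filter
          fun c => F'.entry c.1 c.2 = k) := by
      apply Finset.filter_congr
      rintro ⟨x, y⟩ _
      dsimp only
      rw [bwdEntry_succ]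
    rw [he, F'.content k, nu'_rowLen ha hμ hμa k] at hs
    rcases Nat.lt_or_ge k a with hk | hk
    · rw [if_pos hk] at hs
      have hp := nu_pos hb hμ hμb hk
      omega
    · rw [if_neg (by omega)] at hs
      have hz := rowLen_rectCompl_zero (μ := μ) (b := b) hk
      omega
  lattice := by
    intro i j k
    have hsk := hskchar hπcol hμ hμa
    have hsA := card_split π μ (fun c => c.1 < i ∨ c.1 = i ∧ j ≤ c.2)
        (bwdEntry π μ a F'.entry) (k + 1)
    have hsB := card_split π μ (fun c => c.1 < i ∨ c.1 = i ∧ j ≤ c.2)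
        (bwdEntry π μ a F'.entry) k
    have hcA := col0_card (a := a) (fun c => c.1 < i ∨ c.1 = i ∧ j ≤ c.2)
        (bwdEntry π μ a F'.entry) hsk (bwd_forced F'.entry hsk) (k + 1)
    have hcB := col0_card (a := a) (fun c => c.1 < i ∨ c.1 = i ∧ j ≤ c.2)
        (bwdEntry π μ a F'.entry) hsk (bwd_forced F'.entry hsk) k
    rw [hcA] at hsA
    rw [hcB] at hsB
    dsimp only at hsA hsB
    have heA : (((stripCol π).cells \ (stripCol μ).cells).filter
          fun c => (c.1 < i ∨ c.1 = i ∧ j ≤ c.2 + 1) ∧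
            bwdEntry π μ a F'.entry c.1 (c.2 + 1) = k + 1)
        = (((stripCol π).cells \ (stripCol μ).cells).filter
          fun c => (c.1 < i ∨ c.1 = i ∧ j - 1 ≤ c.2) ∧ F'.entry c.1 c.2 = k + 1) := by
      apply Finset.filter_congr
      rintro ⟨x, y⟩ _
      dsimp only
      rw [bwdEntry_succ]
      constructor <;> rintro ⟨h1, h2⟩ <;> exact ⟨by omega, h2⟩
    have heB : (((stripCol π).cells \ (stripCol μ).cells).filter
          fun c => (c.1 < i ∨ c.1 = i ∧ j ≤ c.2 + 1) ∧
            bwdEntry π μ a F'.entry c.1 (c.2 + 1) = k)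
        = (((stripCol π).cells \ (stripCol μ).cells).filter
          fun c => (c.1 < i ∨ c.1 = i ∧ j - 1 ≤ c.2) ∧ F'.entry c.1 c.2 = k) := by
      apply Finset.filter_congr
      rintro ⟨x, y⟩ _
      dsimp only
      rw [bwdEntry_succ]
      constructor <;> rintro ⟨h1, h2⟩ <;> exact ⟨by omega, h2⟩
    rw [heA] at hsA
    rw [heB] at hsB
    have hlat := F'.lattice i (j - 1) k
    rw [hsA, hsB]
    split_ifs <;> omega

lemma LRFilling.ext' {ν lam κ : YoungDiagram} {F G : LRFilling ν lam κ}
    (h : F.entry = G.entry) : F = G := by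
  cases F
  cases G
  cases h
  rfl

lemma lr_eq (ha : 1 ≤ a) (hb : 2 ≤ b)
    (hπcol : ∀ i, (i, (0 : ℕ)) ∈ π ↔ i < 2 * a) (hμ : μ ≤ rect a b)
    (hμa : 1 ≤ μ.rowLen (a - 1)) (hμb : μ.rowLen 0 ≤ b - 1) :
    lrCoeff π μ (rectCompl a b μ)
      = lrCoeff (stripCol π) (stripCol μ) (rectCompl a (b - 2) (stripCol μ)) := by
  apply Nat.card_congr
  refine ⟨fwdF ha hb hπcol hμ hμa hμb, bwdF ha hb hπcol hμ hμa hμb, ?_, ?_⟩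
  · intro F
    apply LRFilling.ext'
    funext i j
    show bwdEntry π μ a (fun i j => F.entry i (j + 1)) i j = F.entry i j
    cases j with
    | zero =>
      by_cases hc : (i, (0 : ℕ)) ∈ π.cells \ μ.cells
      · have hi := ((hskchar hπcol hμ hμa) i).mp hc
        rw [forced ha hπcol hμ hμa F i hi.1 hi.2]
        simp [bwdEntry, hc]
      · rw [F.zeros i 0 hc]
        simp [bwdEntry, hc]
    | succ j =>
      rw [bwdEntry_succ]
  · intro F'
    apply LRFilling.ext'
    funext i j
    show bwdEntry π μ a F'.entry i (j + 1) = F'.entry i j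
    rw [bwdEntry_succ]

end Main

/-- Let `a ≥ 1`, `b ≥ 2`, `R = (b^a)`, and let `π` be a partition with
exactly `2a` nonzero parts; let `π̄` be `π` with its first column removed.  If `μ ⊆ R` and
`c^π_{μ, μᶜ} ≠ 0` then `μ_a ≥ 1` and `μ₁ ≤ b - 1`; moreover for any `μ ⊆ R` with
`μ_a ≥ 1` and `μ₁ ≤ b - 1`, letting `μ̄` be `μ` with its first column removed,
`c^π_{μ, μᶜ} ≠ 0` (complement in `R`) iff `c^{π̄}_{μ̄, μ̄ᶜ} ≠ 0` (complement in
`((b-2)^a)`). -/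
theorem statement12 (a b : ℕ) (ha : 1 ≤ a) (hb : 2 ≤ b) (π : YoungDiagram)
    (hπpos : 0 < π.rowLen (2 * a - 1)) (hπzero : π.rowLen (2 * a) = 0) :
    (∀ μ : YoungDiagram, μ ≤ rect a b → lrCoeff π μ (rectCompl a b μ) ≠ 0 →
        1 ≤ μ.rowLen (a - 1) ∧ μ.rowLen 0 ≤ b - 1) ∧
    (∀ μ : YoungDiagram, μ ≤ rect a b → 1 ≤ μ.rowLen (a - 1) → μ.rowLen 0 ≤ b - 1 →
        (lrCoeff π μ (rectCompl a b μ) ≠ 0 ↔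
          lrCoeff (stripCol π) (stripCol μ) (rectCompl a (b - 2) (stripCol μ)) ≠ 0)) := by
  have hπcol := pi_col ha hπpos hπzero
  constructor
  · intro μ hμ hne
    have hF : Nonempty (LRFilling π μ (rectCompl a b μ)) := by
      by_contra h
      rw [not_nonempty_iff] at h
      exact hne (by simp [lrCoeff])
    obtain ⟨F⟩ := hF
    exact part1 ha hπcol hμ F
  · intro μ hμ hμa hμb
    rw [lr_eq ha hb hπcol hμ hμa hμb]
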